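/- arXiv:1304.4557 — 2 statements merged into one kernel-verified Lean document; each statement's English description precedes it below -/
import Mathlib

section
/- If U is a finite inconsistent universal first-order theory (i.e., U has no model), then there exists a Herbrand tree for U: a finite binary tree whose inner nodes are labeled with atomic formulas and whose leaves are labeled with ground instances of axioms of U, such that along every branch, the partial truth assignment to atoms determined by the branch (true when descending left, false when descending right) falsifies the quantifier-free formula at the leaf. -/
inductive Compound (atom : Type) : Type where
  | Atomic : atom → Compound atom
  | And : Compound atom → Compound atom → Compound atom
  | Or : Compound atom → Compound atom → Compound atom
  | Not : Compound atom → Compound atom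

variable {atom index : Type}

/-- Total Boolean evaluation of a compound. -/
def cEval (val : atom → Bool) : Compound atom → Bool
  | .Atomic a => val a
  | .And c d => cEval val c && cEval val d
  | .Or c d => cEval val c || cEval val d
  | .Not c => !cEval val c

/-- A path is a finite partial Boolean valuation on atoms. -/
abbrev PPath (atom : Type) : Type := List (atom × Bool)

/-- Lookup of an atom in a path. -/
def findA [DecidableEq atom] (p : PPath atom) (a : atom) : Option Bool :=
  (p.find? (fun x => x.1 = a)).map Prod.snd

/-- Strict partial evaluation of a compound under a path. -/
def pEval [DecidableEq atom] (p : PPath atom) : Compound atom → Option Bool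
  | .Atomic a => findA p a
  | .And c d =>
      match pEval p c, pEval p d with
      | some x, some y => some (x && y)
      | _, _ => none
  | .Or c d =>
      match pEval p c, pEval p d with
      | some x, some y => some (x || y)
      | _, _ => none
  | .Not c => (pEval p c).map (fun b => !b)

/-- The list of atoms occurring in a compound. -/
def atomsOf : Compound atom → List atom
  | .Atomic a => [a]
  | .And c d => atomsOf c ++ atomsOf d
  | .Or c d => atomsOf c ++ atomsOf d
  | .Not c => atomsOf c

/-- Herbrand trees: leaves carry indices, nodes carry atoms. -/
inductive HTree (atom index : Type) : Type where
  | Contrad : index → HTree atom index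
  | Exp : atom → HTree atom index → HTree atom index → HTree atom index

/-- Checker that `t` is a correct Herbrand tree relative to a starting path `p`. -/
def HtreeAt [DecidableEq atom] (Th : index → Compound atom) (p : PPath atom) :
    HTree atom index → Bool
  | .Contrad i => pEval p (Th i) == some false
  | .Exp a t₁ t₂ =>
      (findA p a == none) && HtreeAt Th ((a, true) :: p) t₁
        && HtreeAt Th ((a, false) :: p) t₂

/-- Checker that `t` is a Herbrand tree for the theory `Th`. -/
def Htree [DecidableEq atom] (Th : index → Compound atom) (t : HTree atom index) : Bool :=
  HtreeAt Th [] t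

/-- `q` extends `p` as a partial valuation. -/
def PathExtends [DecidableEq atom] (q p : PPath atom) : Prop :=
  ∀ a b, findA p a = some b → findA q a = some b

/-- A total valuation `val` extends the path `p`. -/
def ValExtends [DecidableEq atom] (val : atom → Bool) (p : PPath atom) : Prop :=
  ∀ a b, findA p a = some b → val a = b

/-- The `good` predicate: reflects the existence of a Herbrand sub-tree below `p`. -/
inductive good [DecidableEq atom] (Th : index → Compound atom) : PPath atom → Prop where
  | good_leaf : ∀ p i, pEval p (Th i) = some false → good Th p
  | good_node : ∀ p a, findA p a = none → good Th ((a, true) :: p) →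
      good Th ((a, false) :: p) → good Th p

/-- Evaluation of a compound in a `Prop`-valued interpretation. -/
def propEval (val : atom → Prop) : Compound atom → Prop
  | .Atomic a => val a
  | .And c d => propEval val c ∧ propEval val d
  | .Or c d => propEval val c ∨ propEval val d
  | .Not c => ¬ propEval val c

/-!
Propositional compactness: the space `atom → Bool` is compact and each set
`{val | cEval val (Th i) = false}` is open, so inconsistency already involves finitely many
axioms, hence only a finite list `L` of atoms. Splitting on the atoms of `L` one at a time then
builds a finite tree, each of whose branches decides all of `L` and so refutes some axiom.
-/

lemma propEval_iff_cEval (val : atom → Bool) (c : Compound atom) :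
    propEval (fun a => val a = true) c ↔ cEval val c = true := by
  induction c with
  | Atomic a => rfl
  | And c d ihc ihd => simp [propEval, cEval, ihc, ihd]
  | Or c d ihc ihd => simp [propEval, cEval, ihc, ihd]
  | Not c ihc => simp [propEval, cEval, ihc]

lemma continuous_cEval (c : Compound atom) : Continuous fun val : atom → Bool => cEval val c := by
  induction c with
  | Atomic a => exact continuous_apply a
  | And c d ihc ihd =>
    exact (continuous_of_discreteTopology (f := fun x : Bool × Bool => x.1 && x.2)).comp
      (ihc.prodMk ihd)
  | Or c d ihc ihd =>
    exact (continuous_of_discreteTopology (f := fun x : Bool × Bool => x.1 || x.2)).comp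
      (ihc.prodMk ihd)
  | Not c ihc => exact (continuous_of_discreteTopology (f := (! ·))).comp ihc

lemma exists_list_atomsOf_subset_of_refuted {Th : index → Compound atom}
    (h : ∀ val : atom → Bool, ∃ i, cEval val (Th i) = false) :
    ∃ L : List atom, ∀ val : atom → Bool,
      ∃ i, (∀ a ∈ atomsOf (Th i), a ∈ L) ∧ cEval val (Th i) = false := by
  obtain ⟨I, hI⟩ := isCompact_univ.elim_finite_subcover
    (fun i => (fun val : atom → Bool => cEval val (Th i)) ⁻¹' {false})
    (fun i => (isOpen_discrete _).preimage (continuous_cEval (Th i)))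
    (fun val _ => Set.mem_iUnion.2 (h val))
  refine ⟨I.toList.flatMap (atomsOf ∘ Th), fun val => ?_⟩
  obtain ⟨i, hiI, hi⟩ := Set.mem_iUnion₂.1 (hI (Set.mem_univ val))
  exact ⟨i, fun a ha => List.mem_flatMap.2 ⟨i, Finset.mem_toList.2 hiI, ha⟩, hi⟩

section Paths

variable [DecidableEq atom]

@[simp]
lemma findA_cons (x : atom) (b : Bool) (p : PPath atom) (a : atom) :
    findA ((x, b) :: p) a = if x = a then some b else findA p a := by
  by_cases h : x = a <;> simp [findA, List.find?, h]

lemma valExtends_getD (p : PPath atom) : ValExtends (fun a => (findA p a).getD false) p :=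
  fun a b h => by simp [h]

lemma ValExtends.of_cons {val : atom → Bool} {p : PPath atom} {a : atom} {b : Bool}
    (hval : ValExtends val ((a, b) :: p)) (ha : findA p a = none) : ValExtends val p := by
  intro x c hx
  have hax : a ≠ x := by rintro rfl; simp [ha] at hx
  exact hval x c (by simp [hax, hx])

lemma pEval_eq_some_cEval {val : atom → Bool} {p : PPath atom} (hval : ValExtends val p)
    (c : Compound atom) (hc : ∀ a ∈ atomsOf c, findA p a ≠ none) :
    pEval p c = some (cEval val c) := by
  induction c with
  | Atomic a =>
    obtain ⟨b, hb⟩ := Option.ne_none_iff_exists'.1 (hc a (by simp [atomsOf]))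
    simp [pEval, cEval, hb, hval a b hb]
  | And c d ihc ihd =>
    simp only [atomsOf, List.mem_append] at hc
    simp [pEval, cEval, ihc fun a ha => hc a (.inl ha), ihd fun a ha => hc a (.inr ha)]
  | Or c d ihc ihd =>
    simp only [atomsOf, List.mem_append] at hc
    simp [pEval, cEval, ihc fun a ha => hc a (.inl ha), ihd fun a ha => hc a (.inr ha)]
  | Not c ihc => simp [pEval, cEval, ihc hc]

end Paths

section Trees

variable [DecidableEq atom] {Th : index → Compound atom}

lemma good.exists_htreeAt {p : PPath atom} (h : good Th p) :
    ∃ t : HTree atom index, HtreeAt Th p t = true := by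
  induction h with
  | good_leaf p i hi => exact ⟨.Contrad i, by simp [HtreeAt, hi]⟩
  | good_node p a ha _ _ ih₁ ih₂ =>
    obtain ⟨t₁, ht₁⟩ := ih₁
    obtain ⟨t₂, ht₂⟩ := ih₂
    exact ⟨.Exp a t₁ t₂, by simp [HtreeAt, ha, ht₁, ht₂]⟩

lemma good_of_refuted_over (L : List atom) (p : PPath atom)
    (h : ∀ val, ValExtends val p →
      ∃ i, (∀ a ∈ atomsOf (Th i), a ∈ L ∨ findA p a ≠ none) ∧ cEval val (Th i) = false) :
    good Th p := by
  induction L generalizing p with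
  | nil =>
    obtain ⟨i, hi, hfalse⟩ := h _ (valExtends_getD p)
    refine good.good_leaf p i ?_
    rw [pEval_eq_some_cEval (valExtends_getD p) (Th i) (by simpa using hi), hfalse]
  | cons a L ih =>
    by_cases ha : findA p a = none
    · refine good.good_node p a ha (ih _ fun val hval => ?_) (ih _ fun val hval => ?_) <;>
      · obtain ⟨i, hi, hfalse⟩ := h val (hval.of_cons ha)
        refine ⟨i, fun x hx => ?_, hfalse⟩
        by_cases hax : a = x
        · simp [hax]
        · simpa [hax, Ne.symm hax] using hi x hx
    · refine ih p fun val hval => ?_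
      obtain ⟨i, hi, hfalse⟩ := h val hval
      refine ⟨i, fun x hx => ?_, hfalse⟩
      rcases hi x hx with hxL | hx
      · rcases List.mem_cons.1 hxL with rfl | hxL
        exacts [.inr ha, .inl hxL]
      · exact .inr hx

end Trees

/-- Herbrand's theorem for an inconsistent universal theory. -/
theorem herbrand_prop {atom index : Type} [DecidableEq atom]
    (Th : index → Compound atom)
    (hU : ∀ val : atom → Prop, ¬ (∀ i : index, propEval val (Th i))) :
    ∃ t : HTree atom index, Htree Th t = true := by
  have hrefuted : ∀ val : atom → Bool, ∃ i, cEval val (Th i) = false := fun val => by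
    simpa [propEval_iff_cEval] using hU (fun a => val a = true)
  obtain ⟨L, hL⟩ := exists_list_atomsOf_subset_of_refuted hrefuted
  refine (good_of_refuted_over L [] fun val _ => ?_).exists_htreeAt
  obtain ⟨i, hiL, hi⟩ := hL val
  exact ⟨i, fun a ha => .inl (hiL a ha), hi⟩
end

section
/- Conversely, from a Herbrand tree one obtains inconsistency: if there exists a tree `t` with `Htree Th t = true`, then for every total valuation `val : atom → Bool` there exists an index `i` with `eval val (Th i) = false`. -/
variable {atom index : Type}

lemma pEval_sound [DecidableEq atom] (val : atom → Bool) :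
    ∀ (c : Compound atom) (p : PPath atom), ValExtends val p →
      ∀ b, pEval p c = some b → cEval val c = b := by
  intro c
  induction c with
  | Atomic a =>
      intro p hv b hb
      exact hv a b hb
  | And c d ihc ihd =>
      intro p hv b hb
      simp only [pEval] at hb
      rcases hc : pEval p c with _ | x <;> rcases hd : pEval p d with _ | y <;>
        simp [hc, hd] at hb
      simp [cEval, ihc p hv x hc, ihd p hv y hd, hb]
  | Or c d ihc ihd =>
      intro p hv b hb
      simp only [pEval] at hb
      rcases hc : pEval p c with _ | x <;> rcases hd : pEval p d with _ | y <;>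
        simp [hc, hd] at hb
      simp [cEval, ihc p hv x hc, ihd p hv y hd, hb]
  | Not c ihc =>
      intro p hv b hb
      simp only [pEval, Option.map_eq_some_iff] at hb
      obtain ⟨x, hx, hbx⟩ := hb
      simp [cEval, ihc p hv x hx, ← hbx]

lemma valExtends_cons [DecidableEq atom] (val : atom → Bool) (p : PPath atom)
    (a : atom) (hv : ValExtends val p) :
    ValExtends val ((a, val a) :: p) := by
  intro x b hb
  simp only [findA, List.find?_cons] at hb
  by_cases hxa : a = x
  · subst hxa
    simp at hb
    exact hb
  · simp [hxa] at hb
    exact hv x b (by simpa [findA] using hb)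

lemma htreeAt_sound [DecidableEq atom] (Th : index → Compound atom) (val : atom → Bool) :
    ∀ (t : HTree atom index) (p : PPath atom), ValExtends val p →
      HtreeAt Th p t = true → ∃ i, cEval val (Th i) = false := by
  intro t
  induction t with
  | Contrad i =>
      intro p hv ht
      simp only [HtreeAt, beq_iff_eq] at ht
      exact ⟨i, pEval_sound val (Th i) p hv false ht⟩
  | Exp a t₁ t₂ ih₁ ih₂ =>
      intro p hv ht
      simp only [HtreeAt, Bool.and_eq_true, beq_iff_eq] at ht
      obtain ⟨⟨_, h₁⟩, h₂⟩ := ht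
      cases hva : val a with
      | true => exact ih₁ ((a, true) :: p) (hva ▸ valExtends_cons val p a hv) h₁
      | false => exact ih₂ ((a, false) :: p) (hva ▸ valExtends_cons val p a hv) h₂

/-- a Herbrand tree yields inconsistency. -/
theorem tree_to_inconsistency {atom index : Type} [DecidableEq atom]
    (Th : index → Compound atom) (h : ∃ t : HTree atom index, Htree Th t = true) :
    ∀ val : atom → Bool, ∃ i : index, cEval val (Th i) = false := by
  intro val
  obtain ⟨t, ht⟩ := h
  exact htreeAt_sound Th val t [] (by intro a b hb; simp [findA] at hb) ht
end
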